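/- arXiv:2201.04077 — 3 statements merged into one kernel-verified Lean document; each statement's English description precedes it below -/
import Mathlib

section
/- Let f : ℝ → SL(2,ℝ) be a one-parameter subgroup whose range has non-compact closure in SL(2,ℝ). Then there exist g ∈ SL(2,ℝ) and a real number c with c ≠ 0 and c ≠ 1 such that g · f(t) · g⁻¹ = f(c t) for all t ∈ ℝ; moreover, any such g does not belong to the range of f. In particular, every non-compact one-parameter subgroup of SL(2,ℝ) has non-trivial normalizer. -/
/-- The topology on `SL(2, ℝ)` induced from the space of 2×2 real matrices. -/
instance : TopologicalSpace (Matrix.SpecialLinearGroup (Fin 2) ℝ) :=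
  TopologicalSpace.induced (fun g => (g : Matrix (Fin 2) (Fin 2) ℝ)) inferInstance

/-!
All `f t` commute with each other, and the trace `τ` of a single `f t₀` decides the picture.
If `τ² < 4`, the centralizer of `f t₀` consists of the matrices `x + y f t₀` with
`x² + τxy + y² = 1`, a positive definite form, so it is compact and contains the range of `f`.
If `τ² > 4`, conjugate `f t₀` to `diag(λ, λ⁻¹)`; then every `f t` is diagonal and
`[[0, 1], [-1, 0]]` inverts them all, so `c = -1`. Otherwise `tr f t = (tr f (t/2))² - 2 = 2`
for all `t`; conjugating some `f t₀ ≠ 1` to `[[1, b], [0, 1]]` makes every `f t` unipotent upper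
triangular, and there `diag(2, 1/2)` acts as the fourth power, so `c = 4`.
Finally, if `g = f s` then `g` commutes with `f`, so `f (c t) = f t`, which for `c ≠ 1` forces
`f = 1`.
-/

open Matrix
open scoped MatrixGroups

namespace Matrix

variable {K : Type*} [Field K]

theorem exists_eq_smul_one_add_smul_of_commute {A M : Matrix (Fin 2) (Fin 2) K}
    (hA : ∀ k : K, A ≠ k • 1) (hM : Commute M A) : ∃ x y : K, M = x • 1 + y • A := by
  have off_diag : ∀ {A M : Matrix (Fin 2) (Fin 2) K}, A 0 1 ≠ 0 → Commute M A →
      ∃ x y : K, M = x • 1 + y • A := by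
    intro A M hb hM
    have e00 := congrFun (congrFun hM.eq 0) 0
    have e01 := congrFun (congrFun hM.eq 0) 1
    simp only [mul_apply, Fin.sum_univ_two] at e00 e01
    refine ⟨M 0 0 - M 0 1 / A 0 1 * A 0 0, M 0 1 / A 0 1, ?_⟩
    ext i j
    fin_cases i <;> fin_cases j <;> simp <;> field_simp
    · linear_combination -e00
    · linear_combination -e01
  by_cases hb : A 0 1 = 0
  · by_cases hc : A 1 0 = 0
    · have had : A 0 0 - A 1 1 ≠ 0 := by
        refine sub_ne_zero.2 fun h => hA (A 0 0) ?_
        ext i j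
        fin_cases i <;> fin_cases j <;> simp [hb, hc, h]
      have e01 := congrFun (congrFun hM.eq 0) 1
      have e10 := congrFun (congrFun hM.eq 1) 0
      simp only [mul_apply, Fin.sum_univ_two, hb, hc, mul_zero, zero_mul, add_zero, zero_add]
        at e01 e10
      refine ⟨M 0 0 - (M 0 0 - M 1 1) / (A 0 0 - A 1 1) * A 0 0,
        (M 0 0 - M 1 1) / (A 0 0 - A 1 1), ?_⟩
      ext i j
      fin_cases i <;> fin_cases j <;> simp [hb, hc]
      · exact (mul_eq_zero.1 (by linear_combination e01.symm)).resolve_right had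
      · exact (mul_eq_zero.1 (by linear_combination e10)).resolve_right had
      · field_simp
        ring
    · obtain ⟨x, y, h⟩ := off_diag (A := Aᵀ) (M := Mᵀ) hc
        (by simp only [Commute, SemiconjBy, ← transpose_mul, hM.eq])
      exact ⟨x, y, by simpa using congrArg transpose h⟩
  · exact off_diag hb hM

theorem exists_cyclic_vector {A : Matrix (Fin 2) (Fin 2) K} (hA : ∀ k : K, A ≠ k • 1) :
    ∃ v : Fin 2 → K, (A *ᵥ v) 0 * v 1 - (A *ᵥ v) 1 * v 0 ≠ 0 := by
  by_contra! h
  have h₀ := h ![1, 0]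
  have h₁ := h ![0, 1]
  have h₂ := h ![1, 1]
  simp [mulVec, dotProduct, Fin.sum_univ_two] at h₀ h₁
  simp [mulVec, dotProduct, Fin.sum_univ_two, h₀, h₁] at h₂
  apply hA (A 0 0)
  ext i j
  fin_cases i <;> fin_cases j <;> simp [h₀, h₁]
  linear_combination -h₂

namespace SpecialLinearGroup

theorem exists_inv_mul_mul_eq_of_mulVec (A : SL(2, K)) {u w : Fin 2 → K}
    (hd : u 0 * w 1 - u 1 * w 0 ≠ 0) {α β γ : K}
    (hu : (A : Matrix (Fin 2) (Fin 2) K) *ᵥ u = α • u)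
    (hw : (A : Matrix (Fin 2) (Fin 2) K) *ᵥ w = β • w + γ • u) :
    ∃ P : SL(2, K), ((P⁻¹ * A * P : SL(2, K)) : Matrix (Fin 2) (Fin 2) K) =
      !![α, γ / (u 0 * w 1 - u 1 * w 0); 0, β] := by
  set d := u 0 * w 1 - u 1 * w 0
  let P : SL(2, K) := ⟨!![u 0, w 0 / d; u 1, w 1 / d], by
    rw [det_fin_two_of]; field_simp; ring⟩
  refine ⟨P, ?_⟩
  have hAP : (A : Matrix (Fin 2) (Fin 2) K) * P = P * !![α, γ / d; 0, β] := by
    have hu₀ := congrFun hu 0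
    have hu₁ := congrFun hu 1
    have hw₀ := congrFun hw 0
    have hw₁ := congrFun hw 1
    simp [mulVec, dotProduct, Fin.sum_univ_two] at hu₀ hu₁ hw₀ hw₁
    ext i j
    fin_cases i <;> fin_cases j <;> simp [P, mul_apply, Fin.sum_univ_two] <;> field_simp
    · linear_combination hu₀
    · linear_combination hw₀
    · linear_combination hu₁
    · linear_combination hw₁
  rw [coe_mul, coe_mul, mul_assoc, hAP, ← mul_assoc, ← coe_mul, inv_mul_cancel, coe_one, one_mul]

theorem exists_inv_mul_mul_eq_diagonal (A : SL(2, K)) {l m : K} (hlm : l ≠ m)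
    (htr : trace (A : Matrix (Fin 2) (Fin 2) K) = l + m) (hprod : l * m = 1) :
    ∃ P : SL(2, K), ((P⁻¹ * A * P : SL(2, K)) : Matrix (Fin 2) (Fin 2) K) = !![l, 0; 0, m] := by
  have hdet := (det_fin_two (A : Matrix (Fin 2) (Fin 2) K)).symm.trans A.2
  rw [trace_fin_two] at htr
  have hA : ∀ k : K, (A : Matrix (Fin 2) (Fin 2) K) ≠ k • 1 := by
    intro k hk
    simp [hk] at hdet htr
    refine hlm (sub_eq_zero.1 (pow_eq_zero_iff two_ne_zero |>.1 ?_))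
    linear_combination (-(2 * k + l + m)) * htr + 4 * hdet - 4 * hprod
  -- By Cayley–Hamilton `(A - m) v` and `(A - l) v` are eigenvectors; they are independent as `v`
  -- is cyclic.
  obtain ⟨v, hv⟩ := exists_cyclic_vector hA
  set p := (A : Matrix (Fin 2) (Fin 2) K) *ᵥ v
  have hu : (A : Matrix (Fin 2) (Fin 2) K) *ᵥ (p - m • v) = l • (p - m • v) := by
    ext i; fin_cases i <;> simp [p, mulVec, dotProduct, Fin.sum_univ_two, vecHead, vecTail]
    · linear_combination (A 0 0 * v 0 + A 0 1 * v 1) * htr - v 0 * hdet + v 0 * hprod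
    · linear_combination (A 1 0 * v 0 + A 1 1 * v 1) * htr - v 1 * hdet + v 1 * hprod
  have hw : (A : Matrix (Fin 2) (Fin 2) K) *ᵥ (p - l • v) =
      m • (p - l • v) + (0 : K) • (p - m • v) := by
    ext i; fin_cases i <;> simp [p, mulVec, dotProduct, Fin.sum_univ_two, vecHead, vecTail]
    · linear_combination (A 0 0 * v 0 + A 0 1 * v 1) * htr - v 0 * hdet + v 0 * hprod
    · linear_combination (A 1 0 * v 0 + A 1 1 * v 1) * htr - v 1 * hdet + v 1 * hprod
  have hd : (p - m • v) 0 * (p - l • v) 1 - (p - m • v) 1 * (p - l • v) 0 ≠ 0 := by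
    convert mul_ne_zero (sub_ne_zero.2 hlm.symm) hv using 1
    simp only [Pi.sub_apply, Pi.smul_apply, smul_eq_mul]
    ring
  obtain ⟨P, hP⟩ := A.exists_inv_mul_mul_eq_of_mulVec hd hu hw
  exact ⟨P, by simpa using hP⟩

theorem exists_inv_mul_mul_eq_of_trace_eq_two (A : SL(2, K))
    (hA : ∀ k : K, (A : Matrix (Fin 2) (Fin 2) K) ≠ k • 1)
    (htr : trace (A : Matrix (Fin 2) (Fin 2) K) = 2) :
    ∃ P : SL(2, K), ∃ b ≠ 0,
      ((P⁻¹ * A * P : SL(2, K)) : Matrix (Fin 2) (Fin 2) K) = !![1, b; 0, 1] := by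
  have hdet := (det_fin_two (A : Matrix (Fin 2) (Fin 2) K)).symm.trans A.2
  rw [trace_fin_two] at htr
  -- `((A - 1) v, v)` is a Jordan basis for a cyclic vector `v`.
  obtain ⟨v, hv⟩ := exists_cyclic_vector hA
  set p := (A : Matrix (Fin 2) (Fin 2) K) *ᵥ v
  have hu : (A : Matrix (Fin 2) (Fin 2) K) *ᵥ (p - v) = (1 : K) • (p - v) := by
    ext i; fin_cases i <;> simp [p, mulVec, dotProduct, Fin.sum_univ_two, vecHead, vecTail]
    · linear_combination (A 0 0 * v 0 + A 0 1 * v 1) * htr - v 0 * hdet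
    · linear_combination (A 1 0 * v 0 + A 1 1 * v 1) * htr - v 1 * hdet
  have hw : (A : Matrix (Fin 2) (Fin 2) K) *ᵥ v = (1 : K) • v + (1 : K) • (p - v) := by
    simp [p]
  have hd : (p - v) 0 * v 1 - (p - v) 1 * v 0 ≠ 0 := by
    convert hv using 1
    simp only [Pi.sub_apply]
    ring
  obtain ⟨P, hP⟩ := A.exists_inv_mul_mul_eq_of_mulVec hd hu hw
  exact ⟨P, _, one_div_ne_zero hd, hP⟩

theorem exists_conj_eq_inv_of_diagonal {R : Type*} [CommRing R] :
    ∃ w : SL(2, R), ∀ Y : SL(2, R), Y 0 1 = 0 → Y 1 0 = 0 → w * Y * w⁻¹ = Y⁻¹ := by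
  let w : SL(2, R) := ⟨!![0, 1; -1, 0], by simp [det_fin_two]⟩
  refine ⟨w, fun Y h₀₁ h₁₀ => ?_⟩
  ext i j
  rw [coe_mul, coe_mul, coe_inv, coe_inv, adjugate_fin_two, adjugate_fin_two]
  fin_cases i <;> fin_cases j <;>
    simp [w, mul_apply, vecMul, dotProduct, Fin.sum_univ_two, h₀₁, h₁₀]

theorem exists_conj_eq_pow_four_of_unipotent [NeZero (2 : K)] :
    ∃ d : SL(2, K), ∀ Y : SL(2, K), Y 0 0 = 1 → Y 1 0 = 0 → Y 1 1 = 1 → d * Y * d⁻¹ = Y ^ 4 := by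
  refine ⟨diag2 2 two_ne_zero, fun Y h₀₀ h₁₀ h₁₁ => Subtype.ext ?_⟩
  have hY : (Y : Matrix (Fin 2) (Fin 2) K) = !![1, Y 0 1; 0, 1] := by
    rw [eta_fin_two (Y : Matrix (Fin 2) (Fin 2) K)]
    simp [h₀₀, h₁₀, h₁₁]
  rw [coe_pow, coe_mul, coe_mul, diag2_inv, diag2_coe', diag2_coe', hY]
  simp [pow_succ, two_ne_zero]
  ring

theorem trace_inv_mul_mul {n R : Type*} [Fintype n] [DecidableEq n] [CommRing R]
    (P A : SpecialLinearGroup n R) :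
    trace ((P⁻¹ * A * P : SpecialLinearGroup n R) : Matrix n n R) = trace (A : Matrix n n R) := by
  rw [coe_mul, trace_mul_comm, ← coe_mul, mul_inv_cancel_left]

theorem trace_mul_self (A : SL(2, K)) :
    trace ((A * A : SL(2, K)) : Matrix (Fin 2) (Fin 2) K) =
      trace (A : Matrix (Fin 2) (Fin 2) K) ^ 2 - 2 := by
  have hdet := (det_fin_two (A : Matrix (Fin 2) (Fin 2) K)).symm.trans A.2
  simp only [coe_mul, trace_fin_two, mul_apply, Fin.sum_univ_two]
  linear_combination (-2) * hdet

/- The topology fixed above is Mathlib's subtype topology on `SL(n, R)`, but instance search does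
not see through it, so Mathlib's instances are restated for it. -/
instance : T2Space SL(2, ℝ) := isClosedEmbedding_val.isEmbedding.t2Space

instance : IsTopologicalGroup SL(2, ℝ) := topologicalGroup

theorem isCompact_centralizer_of_sq_trace_lt_four (A : SL(2, ℝ))
    (hA : trace (A : Matrix (Fin 2) (Fin 2) ℝ) ^ 2 < 4) : IsCompact (Set.centralizer {A}) := by
  set τ := trace (A : Matrix (Fin 2) (Fin 2) ℝ)
  have hdetA := (det_fin_two (A : Matrix (Fin 2) (Fin 2) ℝ)).symm.trans A.2
  have hτ : τ = A 0 0 + A 1 1 := trace_fin_two _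
  have hA_ne : ∀ k : ℝ, (A : Matrix (Fin 2) (Fin 2) ℝ) ≠ k • 1 := by
    intro k hk
    simp [hk] at hdetA hτ
    have : τ ^ 2 = 4 := by rw [hτ]; linear_combination 4 * hdetA
    linarith
  set r := √(4 / (4 - τ ^ 2))
  have hr : ∀ z : ℝ, (4 - τ ^ 2) * z ^ 2 ≤ 4 → z ∈ Set.Icc (-r) r := fun z hz =>
    abs_le.1 (Real.abs_le_sqrt ((le_div_iff₀ (by linarith)).2 (by linarith)))
  have hK : IsCompact ((fun p : ℝ × ℝ => p.1 • (1 : Matrix (Fin 2) (Fin 2) ℝ) + p.2 • (A : _)) ''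
      (Set.Icc (-r) r ×ˢ Set.Icc (-r) r)) :=
    (isCompact_Icc.prod isCompact_Icc).image (by fun_prop)
  refine (isClosedEmbedding_val.isCompact_preimage hK).of_isClosed_subset
    (Set.isClosed_centralizer (M := SL(2, ℝ)) _) fun (g : SL(2, ℝ)) hg => ?_
  have hcomm : Commute (g : Matrix (Fin 2) (Fin 2) ℝ) A := by
    rw [Commute, SemiconjBy, ← coe_mul, ← coe_mul, hg A rfl]
  obtain ⟨x, y, hxy⟩ := exists_eq_smul_one_add_smul_of_commute hA_ne hcomm
  have hdet : x ^ 2 + τ * x * y + y ^ 2 = 1 := by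
    have := g.2
    rw [hxy, det_fin_two] at this
    simp at this
    linear_combination this + x * y * hτ - y ^ 2 * hdetA
  exact ⟨(x, y), ⟨hr x (by nlinarith [sq_nonneg (τ * x + 2 * y)]),
    hr y (by nlinarith [sq_nonneg (2 * x + τ * y)])⟩, hxy.symm⟩

end SpecialLinearGroup

end Matrix

theorem conj_eq_of_conj_inv_mul_mul_eq {G : Type*} [Group G] {P w x y : G}
    (h : w * (P⁻¹ * x * P) * w⁻¹ = P⁻¹ * y * P) : P * w * P⁻¹ * x * (P * w * P⁻¹)⁻¹ = y := by
  rw [show P * w * P⁻¹ * x * (P * w * P⁻¹)⁻¹ = P * (w * (P⁻¹ * x * P) * w⁻¹) * P⁻¹ by group, h]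
  group

namespace AddChar

open SpecialLinearGroup

section

variable {A : Type*} [AddCommMonoid A]

theorem commute_apply {M : Type*} [Monoid M] (χ : AddChar A M) (a b : A) :
    Commute (χ a) (χ b) := by
  rw [Commute, SemiconjBy, ← map_add_eq_mul, ← map_add_eq_mul, add_comm]

theorem commute_inv_mul_mul {n R : Type*} [Fintype n] [DecidableEq n] [CommRing R]
    (χ : AddChar A (SpecialLinearGroup n R)) (P : SpecialLinearGroup n R) (a b : A) :
    Commute ((P⁻¹ * χ a * P : SpecialLinearGroup n R) : Matrix n n R)
      (P⁻¹ * χ b * P : SpecialLinearGroup n R) := by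
  simpa using ((χ.commute_apply a b).map (MulAut.conj P⁻¹)).map coeMonoidHom

theorem exists_conj_eq_inv_of_hyperbolic (χ : AddChar A SL(2, ℝ)) {a₀ : A}
    (h : 4 < trace (χ a₀ : Matrix (Fin 2) (Fin 2) ℝ) ^ 2) :
    ∃ g : SL(2, ℝ), ∀ a, g * χ a * g⁻¹ = (χ a)⁻¹ := by
  set τ := trace (χ a₀ : Matrix (Fin 2) (Fin 2) ℝ)
  set δ := √(τ ^ 2 - 4)
  have hδ : 0 < δ := Real.sqrt_pos.2 (by linarith)
  have hδsq : δ ^ 2 = τ ^ 2 - 4 := Real.sq_sqrt (by linarith)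
  have hlm : (τ + δ) / 2 ≠ (τ - δ) / 2 := by intro heq; linarith
  obtain ⟨P, hP⟩ := (χ a₀).exists_inv_mul_mul_eq_diagonal hlm (by ring)
    (by linear_combination (-1 / 4 : ℝ) * hδsq)
  obtain ⟨w, hw⟩ := exists_conj_eq_inv_of_diagonal (R := ℝ)
  refine ⟨P * w * P⁻¹, fun a => conj_eq_of_conj_inv_mul_mul_eq ?_⟩
  have hD : ∀ k : ℝ, !![(τ + δ) / 2, 0; 0, (τ - δ) / 2] ≠ k • 1 := fun k hk =>
    hlm <| by simpa using (congrFun (congrFun hk 0) 0).trans (congrFun (congrFun hk 1) 1).symm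
  obtain ⟨x, y, hxy⟩ :=
    exists_eq_smul_one_add_smul_of_commute hD (hP ▸ χ.commute_inv_mul_mul P a a₀)
  rw [hw _ (by simp [hxy]) (by simp [hxy])]
  group

end

theorem trace_eq_two_of_sq_trace_eq_four (χ : AddChar ℝ SL(2, ℝ))
    (h : ∀ t, trace (χ t : Matrix (Fin 2) (Fin 2) ℝ) ^ 2 = 4) (t : ℝ) :
    trace (χ t : Matrix (Fin 2) (Fin 2) ℝ) = 2 := by
  rw [show t = t / 2 + t / 2 by ring, map_add_eq_mul, trace_mul_self, h]
  norm_num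

theorem exists_conj_eq_pow_four_of_parabolic (χ : AddChar ℝ SL(2, ℝ)) (hχ : χ ≠ 1)
    (h : ∀ t, trace (χ t : Matrix (Fin 2) (Fin 2) ℝ) ^ 2 = 4) :
    ∃ g : SL(2, ℝ), ∀ t, g * χ t * g⁻¹ = χ t ^ 4 := by
  have htr := χ.trace_eq_two_of_sq_trace_eq_four h
  obtain ⟨t₀, ht₀⟩ := ne_one_iff.1 hχ
  have hA : ∀ k : ℝ, (χ t₀ : Matrix (Fin 2) (Fin 2) ℝ) ≠ k • 1 := by
    intro k hk
    have hk1 : k = 1 := by simpa [hk, trace_fin_two] using htr t₀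
    exact ht₀ (Subtype.ext (by simp [hk, hk1]))
  obtain ⟨P, b, hb, hP⟩ := (χ t₀).exists_inv_mul_mul_eq_of_trace_eq_two hA (htr t₀)
  obtain ⟨d, hd⟩ := exists_conj_eq_pow_four_of_unipotent (K := ℝ)
  refine ⟨P * d * P⁻¹, fun t => conj_eq_of_conj_inv_mul_mul_eq ?_⟩
  have hU : ∀ k : ℝ, !![1, b; 0, 1] ≠ k • 1 := fun k hk =>
    hb <| by simpa using congrFun (congrFun hk 0) 1
  obtain ⟨x, y, hxy⟩ :=
    exists_eq_smul_one_add_smul_of_commute hU (hP ▸ χ.commute_inv_mul_mul P t t₀)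
  have hxy1 : x + y = 1 := by
    have := htr t
    rw [← trace_inv_mul_mul P, hxy] at this
    simp [trace_fin_two] at this
    linarith
  rw [hd _ (by simp [hxy, hxy1]) (by simp [hxy]) (by simp [hxy, hxy1])]
  simpa using conj_pow (a := P⁻¹) (b := χ t) (i := 4)

variable {G : Type*} [Group G]

theorem eq_one_of_map_mul_eq (χ : AddChar ℝ G) {c : ℝ} (hc : c ≠ 1)
    (h : ∀ t, χ (c * t) = χ t) : χ = 1 := by
  ext t
  have hsplit : t = c * (t / (c - 1)) + -(t / (c - 1)) := by
    field_simp [sub_ne_zero.2 hc]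
    ring
  rw [hsplit, map_add_eq_mul, h, map_neg_eq_inv, mul_inv_cancel, one_apply]

theorem notMem_range_of_conj_eq (χ : AddChar ℝ G) (hχ : χ ≠ 1) {g : G} {c : ℝ} (hc : c ≠ 1)
    (hg : ∀ t, g * χ t * g⁻¹ = χ (c * t)) : g ∉ Set.range χ := by
  rintro ⟨s, rfl⟩
  exact hχ <| χ.eq_one_of_map_mul_eq hc fun t => by
    rw [← hg, (χ.commute_apply s t).eq, mul_inv_cancel_right]

end AddChar

theorem noncompact_one_param_subgroup_nontrivial_normalizer_general
    (f : ℝ → Matrix.SpecialLinearGroup (Fin 2) ℝ)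
    (hhom : ∀ s t : ℝ, f (s + t) = f s * f t)
    (hnc : ¬ IsCompact (closure (Set.range f))) :
    (∃ (g : Matrix.SpecialLinearGroup (Fin 2) ℝ) (c : ℝ), c ≠ 0 ∧ c ≠ 1 ∧
      ∀ t : ℝ, g * f t * g⁻¹ = f (c * t)) ∧
    (∀ (g : Matrix.SpecialLinearGroup (Fin 2) ℝ) (c : ℝ), c ≠ 0 → c ≠ 1 →
      (∀ t : ℝ, g * f t * g⁻¹ = f (c * t)) → g ∉ Set.range f) := by
  let χ : AddChar ℝ SL(2, ℝ) := ⟨f, by simpa using hhom 0 0, hhom⟩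
  have hχ : χ ≠ 1 := by
    intro h
    have hf : f = fun _ => 1 := funext fun t => congrArg (· t) h
    exact hnc (by simp [hf])
  refine ⟨?_, fun g c _ hc hg => χ.notMem_range_of_conj_eq hχ hc hg⟩
  by_cases hhyp : ∃ t, 4 < trace (f t : Matrix (Fin 2) (Fin 2) ℝ) ^ 2
  · obtain ⟨t₀, ht₀⟩ := hhyp
    obtain ⟨g, hg⟩ := χ.exists_conj_eq_inv_of_hyperbolic ht₀
    refine ⟨g, -1, by norm_num, by norm_num, fun t => (hg t).trans ?_⟩
    rw [neg_one_mul]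
    exact (χ.map_neg_eq_inv t).symm
  by_cases hell : ∃ t, trace (f t : Matrix (Fin 2) (Fin 2) ℝ) ^ 2 < 4
  · obtain ⟨t₀, ht₀⟩ := hell
    refine absurd (IsCompact.closure_of_subset
      (SpecialLinearGroup.isCompact_centralizer_of_sq_trace_lt_four _ ht₀)
      (Set.range_subset_iff.2 fun t => ?_)) hnc
    rintro _ rfl
    exact (χ.commute_apply t₀ t).eq
  simp only [not_exists, not_lt] at hhyp hell
  obtain ⟨g, hg⟩ :=
    χ.exists_conj_eq_pow_four_of_parabolic hχ fun t => le_antisymm (hhyp t) (hell t)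
  refine ⟨g, 4, by norm_num, by norm_num, fun t => (hg t).trans ?_⟩
  show χ t ^ 4 = χ (4 * t)
  rw [← AddChar.map_nsmul_eq_pow, nsmul_eq_mul, Nat.cast_ofNat]

/-- Every non-compact one-parameter subgroup `f` of `SL(2, ℝ)` is
conjugated to a nontrivial linear time change of itself by some `g ∈ SL(2, ℝ)`;
moreover, any such `g` lies outside the range of `f`. In particular, every non-compact
one-parameter subgroup of `SL(2, ℝ)` has non-trivial normalizer. -/
theorem noncompact_one_param_subgroup_nontrivial_normalizer
    (f : ℝ → Matrix.SpecialLinearGroup (Fin 2) ℝ)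
    (hcont : Continuous f) (hhom : ∀ s t : ℝ, f (s + t) = f s * f t)
    (hnc : ¬ IsCompact (closure (Set.range f))) :
    (∃ (g : Matrix.SpecialLinearGroup (Fin 2) ℝ) (c : ℝ), c ≠ 0 ∧ c ≠ 1 ∧
      ∀ t : ℝ, g * f t * g⁻¹ = f (c * t)) ∧
    (∀ (g : Matrix.SpecialLinearGroup (Fin 2) ℝ) (c : ℝ), c ≠ 0 → c ≠ 1 →
      (∀ t : ℝ, g * f t * g⁻¹ = f (c * t)) → g ∉ Set.range f) :=
  noncompact_one_param_subgroup_nontrivial_normalizer_general f hhom hnc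
end

section
/- Let X be a topological space, ρ : SL(2,ℝ) → Homeo(X) a group homomorphism into the group of self-homeomorphisms of X, and f : ℝ → SL(2,ℝ) a one-parameter subgroup whose range has non-compact closure. Define the flow E_t := ρ(f(t)), and assume E_{t₁} ≠ id for some t₁ ∈ ℝ. Then E is not strongly asymmetric: there exist a homeomorphism F of X and a real number c ≠ 0 such that E_t ∘ F = F ∘ E_{c t} for all t ∈ ℝ, and F ≠ E_{t₀} for every t₀ ∈ ℝ. In particular, a strongly asymmetric nontrivial flow is not the restriction of any SL(2,ℝ)-action by homeomorphisms to a non-compact one-parameter subgroup. -/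
/-- The group of self-homeomorphisms of a topological space, with `(F * G) x = F (G x)`. -/
instance {X : Type*} [TopologicalSpace X] : Group (X ≃ₜ X) where
  mul F G := G.trans F
  one := Homeomorph.refl X
  inv := Homeomorph.symm
  mul_assoc F G H := rfl
  one_mul F := Homeomorph.ext fun x => rfl
  mul_one F := Homeomorph.ext fun x => rfl
  inv_mul_cancel F := Homeomorph.ext fun x => F.symm_apply_apply x

/-!
For a one-parameter subgroup `f` of `SL(2, ℝ)`, every `f t` commutes with `M = f u`. If
`M ≠ ±1`, this puts every `f t` in the plane spanned by `1` and `M`, and the sign of the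
discriminant of `M` decides the rest. If it is negative, `det = 1` cuts out an ellipse in that
plane, so the range of `f` is relatively compact. If it is zero, `f t = 1 + b(t) N` with
`N² = 0`, and an element of `SL(2, ℝ)` conjugating `N` to `4 N` conjugates `f (t / 4)` to `f t`.
If it is positive, `M` is conjugate to `M⁻¹`, and the same element conjugates each `f t` to
`f (-t)`. The scaling factor `c` (`1 / 4` or `-1`) differs from `1`, so the image `F` under `ρ`
of the conjugating element cannot be some `E_{t₀}`: it would commute with the flow, forcing
`E_{(c - 1) t} = 1` for all `t`.
-/

open Matrix
open scoped MatrixGroups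

namespace Matrix

section FinTwo

variable {R : Type*} [CommRing R]

theorem adjugate_fin_two_eq_trace_smul_one_sub (M : Matrix (Fin 2) (Fin 2) R) :
    M.adjugate = M.trace • 1 - M := by
  ext i j
  fin_cases i <;> fin_cases j <;> simp [adjugate_fin_two, trace_fin_two]

theorem adjugate_fin_two_smul_one_add_smul (α β : R) (M : Matrix (Fin 2) (Fin 2) R) :
    (α • 1 + β • M).adjugate = α • 1 + β • M.adjugate := by
  simp only [adjugate_fin_two_eq_trace_smul_one_sub, trace_add, trace_smul, trace_one,
    Fintype.card_fin, smul_eq_mul]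
  module

theorem det_fin_two_smul_one_add_smul (α β : R) (M : Matrix (Fin 2) (Fin 2) R) :
    (α • 1 + β • M).det = α ^ 2 + α * β * M.trace + β ^ 2 * M.det := by
  simp [det_fin_two, trace_fin_two]
  ring

theorem mul_self_eq_zero_of_trace_eq_zero_of_det_eq_zero {N : Matrix (Fin 2) (Fin 2) R}
    (htr : N.trace = 0) (hdet : N.det = 0) : N * N = 0 := by
  have h := N.mul_adjugate
  rwa [adjugate_fin_two_eq_trace_smul_one_sub, htr, hdet, zero_smul, zero_sub, mul_neg,
    neg_eq_zero] at h

theorem eq_smul_one_add_smul_of_entries {m h : Matrix (Fin 2) (Fin 2) R} {β : R}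
    (h01 : m 0 1 = β * h 0 1) (h10 : m 1 0 = β * h 1 0)
    (hdiag : m 0 0 - m 1 1 = β * (h 0 0 - h 1 1)) : m = (m 0 0 - β * h 0 0) • 1 + β • h := by
  ext i j
  fin_cases i <;> fin_cases j <;> simp [h01, h10]
  linear_combination -hdiag

end FinTwo

theorem exists_eq_smul_one_add_smul_of_commute_s6 {K : Type*} [Field K]
    {h m : Matrix (Fin 2) (Fin 2) K} (hh : ∀ a : K, h ≠ a • 1) (hm : Commute m h) :
    ∃ α β : K, m = α • 1 + β • h := by
  have e : ∀ i j, (m * h) i j = (h * m) i j := fun i j => by rw [hm.eq]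
  have e00 := e 0 0; have e01 := e 0 1; have e10 := e 1 0
  simp only [mul_apply, Fin.sum_univ_two] at e00 e01 e10
  by_cases hq : h 0 1 = 0
  · by_cases hr : h 1 0 = 0
    · have hd : h 0 0 - h 1 1 ≠ 0 := fun hd => hh (h 0 0) <| by
        ext i j; fin_cases i <;> fin_cases j <;> simp [hq, hr]; linear_combination -hd
      refine ⟨_, _, eq_smul_one_add_smul_of_entries
        (β := (m 0 0 - m 1 1) / (h 0 0 - h 1 1)) ?_ ?_ ?_⟩
      all_goals field_simp
      · linear_combination -e01
      · linear_combination e10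
    · refine ⟨_, _, eq_smul_one_add_smul_of_entries (β := m 1 0 / h 1 0) ?_ ?_ ?_⟩
      all_goals field_simp
      · linear_combination e00
      · linear_combination -e10
  · refine ⟨_, _, eq_smul_one_add_smul_of_entries (β := m 0 1 / h 0 1) ?_ ?_ ?_⟩
    all_goals field_simp
    · linear_combination -e00
    · linear_combination e01

theorem smul_one_add_smul_mul_smul_one_add_smul {n R : Type*} [Fintype n] [DecidableEq n]
    [CommRing R] {N : Matrix n n R} (hN : N * N = 0) (a b c d : R) :
    (a • 1 + b • N) * (c • 1 + d • N) = (a * c) • 1 + (a * d + b * c) • N := by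
  simp only [add_mul, mul_add, smul_mul_smul_comm, one_mul, mul_one, hN, smul_zero]
  module

/-- With `J = !![0, 1; -1, 0]` and `h₀` the traceless part of `h`, the witness is a multiple of
`J - (tr (J h₀) / tr (h₀²)) • h₀`: it is traceless and trace-orthogonal to `h₀`, hence
anticommutes with `h₀` and so conjugates `h = tr h / 2 + h₀` to `adj h = tr h / 2 - h₀`; its
determinant is positive because `tr (h₀²) = discr h / 2 > 0`. -/
theorem exists_specialLinearGroup_mul_eq_adjugate_mul (h : Matrix (Fin 2) (Fin 2) ℝ)
    (hh : 0 < h.discr) :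
    ∃ g : SL(2, ℝ), (g : Matrix (Fin 2) (Fin 2) ℝ) * h = h.adjugate * g := by
  obtain ⟨p, q, r, s, rfl⟩ : ∃ p q r s, h = !![p, q; r, s] := ⟨_, _, _, _, eta_fin_two h⟩
  rw [discr_fin_two, det_fin_two_of, trace_fin_two_of] at hh
  set D := (p - s) ^ 2 + 4 * (q * r)
  have hD : 0 < D := by linarith
  set Y := !![(q - r) * (p - s), D + 2 * q * (q - r); -D + 2 * r * (q - r), -((q - r) * (p - s))]
  have hY : 0 < Y.det := by
    rw [det_fin_two_of]
    nlinarith [sq_nonneg (q - r)]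
  refine ⟨⟨(√Y.det)⁻¹ • Y, ?_⟩, ?_⟩
  · rw [det_smul, Fintype.card_fin, inv_pow, Real.sq_sqrt hY.le, inv_mul_cancel₀ hY.ne']
  · rw [smul_mul_assoc, mul_smul_comm]
    congr 1
    ext i j
    fin_cases i <;> fin_cases j <;> simp [Y, D, adjugate_fin_two_of] <;> ring

/-- The witness is `2 • N K + ½ • K N`, where `K = J / tr (J N)` for `J = !![0, 1; -1, 0]`
(`tr (J N) ≠ 0` since `N ≠ 0` is nilpotent): then `N K + K N = 1` and `N K N = N`, so `N K` and
`K N` are complementary projections and the witness acts as `diag (2, ½)` in the basis they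
define. -/
theorem exists_specialLinearGroup_mul_eq_four_smul_mul {N : Matrix (Fin 2) (Fin 2) ℝ}
    (htr : N.trace = 0) (hdet : N.det = 0) (hN : N ≠ 0) :
    ∃ g : SL(2, ℝ), (g : Matrix (Fin 2) (Fin 2) ℝ) * N = (4 : ℝ) • (N * g) := by
  obtain ⟨p, q, r, s, rfl⟩ : ∃ p q r s, N = !![p, q; r, s] := ⟨_, _, _, _, eta_fin_two N⟩
  rw [trace_fin_two_of] at htr
  rw [det_fin_two_of] at hdet
  obtain rfl : s = -p := by linarith
  have hrq : r - q ≠ 0 := by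
    intro hrq
    have hsq : p ^ 2 + q ^ 2 = 0 := by linear_combination -hdet - q * hrq
    have hp : p = 0 := by nlinarith [sq_nonneg q]
    have hq : q = 0 := by nlinarith [sq_nonneg p]
    have hr : r = 0 := by linarith
    exact hN (by ext i j; fin_cases i <;> fin_cases j <;> simp [hp, hq, hr])
  refine ⟨⟨(2 * (r - q))⁻¹ • !![r - 4 * q, 3 * p; 3 * p, 4 * r - q], ?_⟩, ?_⟩
  · rw [det_smul, det_fin_two_of, Fintype.card_fin]
    field_simp
    linear_combination 9 * hdet
  · rw [smul_mul_assoc, mul_smul_comm, smul_comm]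
    congr 1
    ext i j
    fin_cases i <;> fin_cases j <;> simp
    · ring
    · linear_combination 15 * hdet
    · linear_combination -15 * hdet
    · ring

end Matrix

def IsCNormalizer {H : Type*} [Mul H] (c : ℝ) (E : ℝ → H) (F : H) : Prop :=
  ∀ t, E t * F = F * E (c * t)

namespace IsCNormalizer

variable {H : Type*} {c : ℝ} {E : ℝ → H} {F : H}

theorem map [Mul H] {K G : Type*} [Mul K] [FunLike G H K] [MulHomClass G H K]
    (hF : IsCNormalizer c E F) (φ : G) : IsCNormalizer c (φ ∘ E) (φ F) := fun t => by
  simp only [Function.comp_apply, ← map_mul, hF t]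

theorem ne_apply [Group H] (hF : IsCNormalizer c E F) (hE : ∀ s t, E (s + t) = E s * E t)
    (hc : c ≠ 1) {t₁ : ℝ} (ht₁ : E t₁ ≠ 1) (t₀ : ℝ) : F ≠ E t₀ := by
  rintro rfl
  have hc' : c - 1 ≠ 0 := sub_ne_zero.mpr hc
  set t := t₁ / (c - 1) with ht
  have hct : E (c * t) = E t₁ * E t := by
    rw [← hE, ht]
    congr 1
    field_simp
    ring
  have hcomm : E t * E t₀ = E t₀ * E t := by rw [← hE, ← hE, add_comm]
  have : E t = E t₁ * E t := by
    rw [← hct]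
    exact mul_left_cancel (hcomm.symm.trans (hF t))
  exact ht₁ (right_eq_mul.mp this)

end IsCNormalizer

namespace Matrix.SpecialLinearGroup

theorem isCompact_closure_of_forall_coe_mem {n R : Type*} [Fintype n] [DecidableEq n]
    [CommRing R] [TopologicalSpace R] [IsTopologicalRing R] [T2Space R]
    {S : Set (SpecialLinearGroup n R)} {C : Set (Matrix n n R)} (hC : IsCompact C)
    (hS : ∀ g ∈ S, (g : Matrix n n R) ∈ C) : IsCompact (closure S) :=
  (isClosedEmbedding_val.isCompact_preimage hC).of_isClosed_subset isClosed_closure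
    (closure_minimal hS (hC.isClosed.preimage continuous_subtype_val))

theorem isCompact_closure_of_discr_neg {S : Set SL(2, ℝ)} {M : Matrix (Fin 2) (Fin 2) ℝ}
    (hM : M.discr < 0)
    (hS : ∀ g ∈ S, ∃ α β : ℝ, (g : Matrix (Fin 2) (Fin 2) ℝ) = α • 1 + β • M) :
    IsCompact (closure S) := by
  rw [discr_fin_two] at hM
  set e := 4 * M.det - M.trace ^ 2
  have he : 0 < e := by linarith
  have hbox : IsCompact (Set.Icc (-√(4 * M.det / e)) √(4 * M.det / e) ×ˢ
      Set.Icc (-√(4 / e)) √(4 / e)) :=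
    isCompact_Icc.prod isCompact_Icc
  refine isCompact_closure_of_forall_coe_mem
    (hbox.image (f := fun p : ℝ × ℝ => p.1 • (1 : Matrix (Fin 2) (Fin 2) ℝ) + p.2 • M)
      (by fun_prop)) fun g hg => ?_
  obtain ⟨α, β, hαβ⟩ := hS g hg
  have hdet : α ^ 2 + α * β * M.trace + β ^ 2 * M.det = 1 := by
    rw [← det_fin_two_smul_one_add_smul, ← hαβ, g.det_coe]
  refine ⟨(α, β), ⟨abs_le.mp (Real.abs_le_sqrt ?_), abs_le.mp (Real.abs_le_sqrt ?_)⟩, hαβ.symm⟩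
  · rw [le_div_iff₀ he]
    nlinarith [sq_nonneg (2 * M.det * β + α * M.trace)]
  · rw [le_div_iff₀ he]
    nlinarith [sq_nonneg (2 * α + β * M.trace)]

end Matrix.SpecialLinearGroup

open Matrix.SpecialLinearGroup

section OneParameterSubgroup

variable {f : ℝ → SL(2, ℝ)}

theorem exists_isCNormalizer_neg_one_of_discr_pos (hf : ∀ s t, f (s + t) = f s * f t)
    {M : Matrix (Fin 2) (Fin 2) ℝ} (hM : 0 < M.discr)
    (hspan : ∀ t, ∃ α β : ℝ, (f t : Matrix (Fin 2) (Fin 2) ℝ) = α • 1 + β • M) :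
    ∃ g, IsCNormalizer (-1) f g := by
  obtain ⟨g, hg⟩ := exists_specialLinearGroup_mul_eq_adjugate_mul M hM
  refine ⟨g, fun t => Subtype.ext ?_⟩
  obtain ⟨α, β, hαβ⟩ := hspan (-1 * t)
  have h0 : f 0 = 1 := by simpa using hf 0 0
  have hinv : f t = (f (-1 * t))⁻¹ := eq_inv_of_mul_eq_one_left <| by
    rw [← hf, show t + -1 * t = 0 by ring, h0]
  rw [coe_mul, coe_mul, hinv, coe_inv, hαβ, adjugate_fin_two_smul_one_add_smul]
  simp only [add_mul, mul_add, smul_mul_assoc, mul_smul_comm, one_mul, mul_one, hg]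

theorem exists_coe_eq_one_add_smul_of_nilpotent (hf : ∀ s t, f (s + t) = f s * f t)
    {N : Matrix (Fin 2) (Fin 2) ℝ} (htr : N.trace = 0) (hdet : N.det = 0)
    (hspan : ∀ t, ∃ α β : ℝ, (f t : Matrix (Fin 2) (Fin 2) ℝ) = α • 1 + β • N) (t : ℝ) :
    ∃ b : ℝ, (f t : Matrix (Fin 2) (Fin 2) ℝ) = 1 + b • N := by
  obtain ⟨α, β, hαβ⟩ := hspan (t / 2)
  have hα : α * α = 1 := by
    have := (f (t / 2)).det_coe
    rw [hαβ, det_fin_two_smul_one_add_smul, htr, hdet] at this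
    linear_combination this
  refine ⟨α * β + β * α, ?_⟩
  rw [← add_halves t, hf, coe_mul, hαβ, smul_one_add_smul_mul_smul_one_add_smul
    (mul_self_eq_zero_of_trace_eq_zero_of_det_eq_zero htr hdet), hα, one_smul]

theorem exists_isCNormalizer_one_fourth_of_discr_eq_zero (hf : ∀ s t, f (s + t) = f s * f t)
    {M : Matrix (Fin 2) (Fin 2) ℝ} (hM : M.discr = 0) (hM₁ : ∀ a : ℝ, M ≠ a • 1)
    (hspan : ∀ t, ∃ α β : ℝ, (f t : Matrix (Fin 2) (Fin 2) ℝ) = α • 1 + β • M) :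
    ∃ g, IsCNormalizer (1 / 4) f g := by
  rw [discr_fin_two] at hM
  set N := M - (M.trace / 2) • (1 : Matrix (Fin 2) (Fin 2) ℝ) with hN
  have htr : N.trace = 0 := by
    simp only [hN, trace_sub, trace_smul, trace_one, Fintype.card_fin, smul_eq_mul]
    ring
  have hdet : N.det = 0 := by
    rw [show N = (-(M.trace / 2)) • 1 + (1 : ℝ) • M by rw [hN]; module,
      det_fin_two_smul_one_add_smul]
    linear_combination -hM / 4
  have hNN : N * N = 0 := mul_self_eq_zero_of_trace_eq_zero_of_det_eq_zero htr hdet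
  have hspanN : ∀ t, ∃ α β : ℝ, (f t : Matrix (Fin 2) (Fin 2) ℝ) = α • 1 + β • N := by
    intro t
    obtain ⟨α, β, hαβ⟩ := hspan t
    exact ⟨α + β * (M.trace / 2), β, by rw [hαβ, hN]; module⟩
  have hdouble : ∀ u b : ℝ, (f u : Matrix (Fin 2) (Fin 2) ℝ) = 1 + b • N →
      (f (2 * u) : Matrix (Fin 2) (Fin 2) ℝ) = 1 + (2 * b) • N := by
    intro u b hb
    rw [two_mul, hf, coe_mul, hb]
    simp only [add_mul, mul_add, one_mul, mul_one, smul_mul_smul_comm, hNN, smul_zero]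
    module
  obtain ⟨g, hg⟩ := exists_specialLinearGroup_mul_eq_four_smul_mul htr hdet
    fun h => hM₁ (M.trace / 2) (sub_eq_zero.mp h)
  refine ⟨g, fun t => Subtype.ext ?_⟩
  obtain ⟨b, hb⟩ := exists_coe_eq_one_add_smul_of_nilpotent hf htr hdet hspanN (1 / 4 * t)
  have h4 := hdouble _ _ (hdouble _ _ hb)
  rw [show 2 * (2 * (1 / 4 * t)) = t by ring] at h4
  rw [coe_mul, coe_mul, h4, hb]
  simp only [add_mul, mul_add, smul_mul_assoc, mul_smul_comm, one_mul, mul_one, hg]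
  module

theorem exists_isCNormalizer_of_not_isCompact (hf : ∀ s t, f (s + t) = f s * f t)
    (hnc : ¬IsCompact (closure (Set.range f))) :
    ∃ c g, c ≠ 0 ∧ c ≠ 1 ∧ IsCNormalizer c f g := by
  obtain ⟨u, hu⟩ : ∃ u, ∀ a : ℝ, (f u : Matrix (Fin 2) (Fin 2) ℝ) ≠ a • 1 := by
    by_contra! hscalar
    refine hnc (isCompact_closure_of_forall_coe_mem (C := {1, -1}) (Set.toFinite _).isCompact ?_)
    rintro _ ⟨t, rfl⟩
    obtain ⟨a, ha⟩ := hscalar t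
    have ha2 : a ^ 2 = 1 := by
      simpa [ha, det_fin_two_smul_one_add_smul] using (f t).det_coe
    rcases sq_eq_one_iff.mp ha2 with rfl | rfl <;> simp [ha]
  have hspan : ∀ t, ∃ α β : ℝ,
      (f t : Matrix (Fin 2) (Fin 2) ℝ) = α • 1 + β • (f u : Matrix (Fin 2) (Fin 2) ℝ) := by
    refine fun t => exists_eq_smul_one_add_smul_of_commute_s6 hu ?_
    rw [Commute, SemiconjBy, ← coe_mul, ← coe_mul, ← hf, ← hf, add_comm]
  rcases lt_trichotomy (f u : Matrix (Fin 2) (Fin 2) ℝ).discr 0 with h | h | h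
  · exact absurd (isCompact_closure_of_discr_neg h (by rintro _ ⟨t, rfl⟩; exact hspan t)) hnc
  · obtain ⟨g, hg⟩ := exists_isCNormalizer_one_fourth_of_discr_eq_zero hf h hu hspan
    exact ⟨1 / 4, g, by norm_num, by norm_num, hg⟩
  · obtain ⟨g, hg⟩ := exists_isCNormalizer_neg_one_of_discr_pos hf h hspan
    exact ⟨-1, g, by norm_num, by norm_num, hg⟩

end OneParameterSubgroup

theorem flow_from_SL2_action_not_strongly_asymmetric_general {X : Type*} [TopologicalSpace X]
    (ρ : Matrix.SpecialLinearGroup (Fin 2) ℝ →* (X ≃ₜ X))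
    (f : ℝ → Matrix.SpecialLinearGroup (Fin 2) ℝ)
    (hhom : ∀ s t : ℝ, f (s + t) = f s * f t)
    (hnc : ¬ IsCompact (closure (Set.range f)))
    (t₁ : ℝ) (ht₁ : ρ (f t₁) ≠ Homeomorph.refl X) :
    ∃ (F : X ≃ₜ X) (c : ℝ), c ≠ 0 ∧
      (∀ t : ℝ, ⇑(ρ (f t)) ∘ ⇑F = ⇑F ∘ ⇑(ρ (f (c * t)))) ∧
      ∀ t₀ : ℝ, F ≠ ρ (f t₀) := by
  obtain ⟨c, g, hc₀, hc₁, hg⟩ := exists_isCNormalizer_of_not_isCompact hhom hnc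
  have hρg : IsCNormalizer c (ρ ∘ f) (ρ g) := hg.map ρ
  have hρf : ∀ s t, (ρ ∘ f) (s + t) = (ρ ∘ f) s * (ρ ∘ f) t := fun s t => by
    simp only [Function.comp_apply, hhom, map_mul]
  exact ⟨ρ g, c, hc₀, fun t => congrArg DFunLike.coe (hρg t), hρg.ne_apply hρf hc₁ ht₁⟩

/-- If a flow `E_t = ρ(f(t))` arises from an `SL(2, ℝ)`-action `ρ` by
homeomorphisms restricted to a non-compact one-parameter subgroup `f`, and `E` is
nontrivial, then `E` is not strongly asymmetric: it has a `c`-normalizer that is not an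
element of the flow. -/
theorem flow_from_SL2_action_not_strongly_asymmetric {X : Type*} [TopologicalSpace X]
    (ρ : Matrix.SpecialLinearGroup (Fin 2) ℝ →* (X ≃ₜ X))
    (f : ℝ → Matrix.SpecialLinearGroup (Fin 2) ℝ)
    (hcont : Continuous f) (hhom : ∀ s t : ℝ, f (s + t) = f s * f t)
    (hnc : ¬ IsCompact (closure (Set.range f)))
    (t₁ : ℝ) (ht₁ : ρ (f t₁) ≠ Homeomorph.refl X) :
    ∃ (F : X ≃ₜ X) (c : ℝ), c ≠ 0 ∧
      (∀ t : ℝ, ⇑(ρ (f t)) ∘ ⇑F = ⇑F ∘ ⇑(ρ (f (c * t)))) ∧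
      ∀ t₀ : ℝ, F ≠ ρ (f t₀) :=
  flow_from_SL2_action_not_strongly_asymmetric_general ρ f hhom hnc t₁ ht₁
end

section
/- Let G be a topological abelian (additive) group and φ : ℝ → G a continuous additive group homomorphism, and consider the flow E_t(x) = x + φ(t) on G. Then for every x ∈ G, the orbit closure K = closure{x + φ(t) : t ∈ ℝ} is a minimal set for E: for every y ∈ K, the closure of {y + φ(t) : t ∈ ℝ} equals K, and hence every nonempty closed E-invariant subset of K equals K. In particular, for straight-line flows on tori, every orbit closure is a minimal set. -/
/-! The orbit closure of `x` under `E_t x = x + φ t` is the coset `x + H` of the closed subgroup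
`H = closure (range φ)`, and any point `y` of a coset of `H` has the same coset `y + H`, so
every point of `K` has orbit closure `K`. A nonempty closed invariant `K' ⊆ K` contains the
orbit closure of any of its points, hence all of `K`. -/

open Set Pointwise

theorem closure_range_add {G : Type*} [AddGroup G] [TopologicalSpace G] [ContinuousAdd G]
    {ι : Sort*} (x : G) (f : ι → G) :
    closure (range fun t => x + f t) = x +ᵥ closure (range f) := by
  rw [range_add, closure_vadd]

theorem leftAddCoset_eq_of_mem {G : Type*} [AddGroup G] (H : AddSubgroup G) {x y : G}
    (hy : y ∈ x +ᵥ (H : Set G)) : y +ᵥ (H : Set G) = x +ᵥ (H : Set G) := by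
  rw [mem_leftAddCoset_iff] at hy
  rw [leftAddCoset_eq_iff]
  simpa using H.neg_mem hy

theorem closure_range_add_hom_eq_of_mem {M G : Type*} [AddGroup M] [AddGroup G]
    [TopologicalSpace G] [IsTopologicalAddGroup G] (φ : M →+ G) {x y : G}
    (hy : y ∈ closure (range fun t => x + φ t)) :
    closure (range fun t => y + φ t) = closure (range fun t => x + φ t) := by
  rw [closure_range_add] at hy ⊢
  rw [closure_range_add]
  exact leftAddCoset_eq_of_mem φ.range.topologicalClosure hy

theorem closure_range_subset_of_mapsTo {X ι : Type*} [TopologicalSpace X] (E : ι → X → X)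
    {K : Set X} (hK : IsClosed K) (hE : ∀ t, MapsTo (E t) K K) {y : X} (hy : y ∈ K) :
    closure (range fun t => E t y) ⊆ K :=
  closure_minimal (range_subset_iff.2 fun t => hE t hy) hK

theorem eq_of_subset_of_closure_range_eq {X ι : Type*} [TopologicalSpace X] (E : ι → X → X)
    {K K' : Set X} (hmin : ∀ y ∈ K, closure (range fun t => E t y) = K) (hK' : K' ⊆ K)
    (hne : K'.Nonempty) (hclosed : IsClosed K') (hE : ∀ t, MapsTo (E t) K' K') : K' = K := by
  obtain ⟨y, hy⟩ := hne
  refine hK'.antisymm ?_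
  rw [← hmin y (hK' hy)]
  exact closure_range_subset_of_mapsTo E hclosed hE hy

theorem translation_flow_orbit_closure_minimal_general {G : Type*} [AddCommGroup G]
    [TopologicalSpace G] [IsTopologicalAddGroup G]
    (φ : ℝ →+ G) (x : G) :
    (∀ y ∈ closure (Set.range fun t : ℝ => x + φ t),
      closure (Set.range fun t : ℝ => y + φ t) =
        closure (Set.range fun t : ℝ => x + φ t)) ∧
    (∀ K' ⊆ closure (Set.range fun t : ℝ => x + φ t), K'.Nonempty → IsClosed K' →
      (∀ t : ℝ, (fun z => z + φ t) '' K' = K') →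
      K' = closure (Set.range fun t : ℝ => x + φ t)) := by
  have hmin : ∀ y ∈ closure (range fun t : ℝ => x + φ t),
      closure (range fun t : ℝ => y + φ t) = closure (range fun t : ℝ => x + φ t) :=
    fun _ => closure_range_add_hom_eq_of_mem φ
  refine ⟨hmin, fun K' hK' hne hclosed hinv => ?_⟩
  exact eq_of_subset_of_closure_range_eq (fun t z => z + φ t) hmin hK' hne hclosed
    fun t => (mapsTo_image _ K').mono_right (hinv t).subset

/-- For the translation flow `E_t x = x + φ t` on a topological abelian
group `G` (`φ : ℝ → G` a continuous homomorphism), every orbit closure is a minimal set: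
the orbit closure of every point of `K = closure {x + φ t}` equals `K`, and every
nonempty closed invariant subset of `K` equals `K`. -/
theorem translation_flow_orbit_closure_minimal {G : Type*} [AddCommGroup G]
    [TopologicalSpace G] [IsTopologicalAddGroup G]
    (φ : ℝ →+ G) (hφ : Continuous φ) (x : G) :
    (∀ y ∈ closure (Set.range fun t : ℝ => x + φ t),
      closure (Set.range fun t : ℝ => y + φ t) =
        closure (Set.range fun t : ℝ => x + φ t)) ∧
    (∀ K' ⊆ closure (Set.range fun t : ℝ => x + φ t), K'.Nonempty → IsClosed K' →
      (∀ t : ℝ, (fun z => z + φ t) '' K' = K') →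
      K' = closure (Set.range fun t : ℝ => x + φ t)) :=
  translation_flow_orbit_closure_minimal_general φ x
end
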